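/- Let N ≥ 3 be odd and m = (N−1)/2. Consider the N functions a_1, …, a_m, b_1, …, b_m, a_N on ℝ^{2N}, where a_k = ½(Q_k² + P_k² + Q_{N−k}² + P_{N−k}²), b_k = Q_k P_{N−k} − Q_{N−k} P_k, a_N = ½(Q_N² + P_N²). At every point x ∈ ℝ^{2N} such that a_k(x) > 0 and |b_k(x)| < a_k(x) for all 1 ≤ k ≤ m and a_N(x) > 0, the derivatives (gradients) of these N functions are linearly independent. -/

import Mathlib

noncomputable section

/-- The coordinate with (1-based) label `j` is the component `(j−1) mod N` of `Fin N`. -/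
def co (N : ℕ) (hN : 0 < N) (j : ℕ) : Fin N := ⟨(j - 1) % N, Nat.mod_lt _ hN⟩

/-- Hopf variable `a_k = ½(Q_k² + P_k² + Q_{N−k}² + P_{N−k}²)`. -/
def aH (N : ℕ) (hN : 0 < N) (k : ℕ) (x : (Fin N → ℝ) × (Fin N → ℝ)) : ℝ :=
  (x.1 (co N hN k) ^ 2 + x.2 (co N hN k) ^ 2
    + x.1 (co N hN (N - k)) ^ 2 + x.2 (co N hN (N - k)) ^ 2) / 2

/-- Hopf variable `b_k = Q_k P_{N−k} − Q_{N−k} P_k`. -/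
def bH (N : ℕ) (hN : 0 < N) (k : ℕ) (x : (Fin N → ℝ) × (Fin N → ℝ)) : ℝ :=
  x.1 (co N hN k) * x.2 (co N hN (N - k)) - x.1 (co N hN (N - k)) * x.2 (co N hN k)

/-- `a_N = ½(Q_N² + P_N²)`. -/
def aNf (N : ℕ) (hN : 0 < N) (x : (Fin N → ℝ) × (Fin N → ℝ)) : ℝ :=
  (x.1 (co N hN N) ^ 2 + x.2 (co N hN N) ^ 2) / 2

/-- The family `a_1, …, a_m, b_1, …, b_m, a_N` (`m = (N−1)/2`, `N = 2m+1` odd),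
indexed by `Fin N`: index `i < m` gives `a_{i+1}`, index `m ≤ i < 2m` gives
`b_{i−m+1}`, index `i = N−1` gives `a_N`. -/
def emFam (N : ℕ) (hN : 0 < N) (i : Fin N) : ((Fin N → ℝ) × (Fin N → ℝ)) → ℝ :=
  if (i : ℕ) < (N - 1) / 2 then aH N hN ((i : ℕ) + 1)
  else if (i : ℕ) < N - 1 then bH N hN ((i : ℕ) - (N - 1) / 2 + 1)
  else aNf N hN

/-!
Each `a_k`, `b_k` (`1 ≤ k ≤ m`) depends only on the coordinates `Q_k, P_k, Q_{N−k}, P_{N−k}`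
and `a_N` only on `Q_N, P_N`, and these blocks of coordinates are disjoint. So a vanishing linear
combination of the differentials, tested on the coordinate directions of one block, only involves
that block. On the block of `k` the gradients of `a_k` and `b_k` have Gram matrix
`2 [[a_k, b_k], [b_k, a_k]]`, nondegenerate because `|b_k| < a_k`; the gradient of `a_N` is
nonzero because `a_N > 0`.
-/

abbrev PhaseSpace (N : ℕ) := (Fin N → ℝ) × (Fin N → ℝ)

section Calculus

variable {N : ℕ}

def qCoord (i : Fin N) : PhaseSpace N →L[ℝ] ℝ :=
  (ContinuousLinearMap.proj i).comp (ContinuousLinearMap.fst ℝ _ _)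

def pCoord (i : Fin N) : PhaseSpace N →L[ℝ] ℝ :=
  (ContinuousLinearMap.proj i).comp (ContinuousLinearMap.snd ℝ _ _)

@[simp] lemma qCoord_apply (i : Fin N) (w : PhaseSpace N) : qCoord i w = w.1 i := rfl

@[simp] lemma pCoord_apply (i : Fin N) (w : PhaseSpace N) : pCoord i w = w.2 i := rfl

lemma hasFDerivAt_fst_apply (i : Fin N) (x : PhaseSpace N) :
    HasFDerivAt (fun y : PhaseSpace N => y.1 i) (qCoord i) x :=
  (qCoord i).hasFDerivAt

lemma hasFDerivAt_snd_apply (i : Fin N) (x : PhaseSpace N) :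
    HasFDerivAt (fun y : PhaseSpace N => y.2 i) (pCoord i) x :=
  (pCoord i).hasFDerivAt

variable (hN : 0 < N) (x w : PhaseSpace N)

lemma fderiv_aH_apply (k : ℕ) :
    fderiv ℝ (aH N hN k) x w
      = x.1 (co N hN k) * w.1 (co N hN k) + x.2 (co N hN k) * w.2 (co N hN k)
        + x.1 (co N hN (N - k)) * w.1 (co N hN (N - k))
        + x.2 (co N hN (N - k)) * w.2 (co N hN (N - k)) := by
  unfold aH
  generalize co N hN k = α, co N hN (N - k) = β
  have h := (((((hasFDerivAt_fst_apply α x).pow 2).fun_add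
    ((hasFDerivAt_snd_apply α x).pow 2)).fun_add ((hasFDerivAt_fst_apply β x).pow 2)).fun_add
    ((hasFDerivAt_snd_apply β x).pow 2)).mul_const 2⁻¹
  simp only [div_eq_mul_inv]
  rw [h.fderiv]
  simp
  ring

lemma fderiv_bH_apply (k : ℕ) :
    fderiv ℝ (bH N hN k) x w
      = w.1 (co N hN k) * x.2 (co N hN (N - k)) + x.1 (co N hN k) * w.2 (co N hN (N - k))
        - w.1 (co N hN (N - k)) * x.2 (co N hN k) - x.1 (co N hN (N - k)) * w.2 (co N hN k) := by
  unfold bH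
  generalize co N hN k = α, co N hN (N - k) = β
  have h := ((hasFDerivAt_fst_apply α x).fun_mul (hasFDerivAt_snd_apply β x)).fun_sub
    ((hasFDerivAt_fst_apply β x).fun_mul (hasFDerivAt_snd_apply α x))
  rw [h.fderiv]
  simp
  ring

lemma fderiv_aNf_apply :
    fderiv ℝ (aNf N hN) x w
      = x.1 (co N hN N) * w.1 (co N hN N) + x.2 (co N hN N) * w.2 (co N hN N) := by
  unfold aNf
  generalize co N hN N = γ
  have h := (((hasFDerivAt_fst_apply γ x).pow 2).fun_add
    ((hasFDerivAt_snd_apply γ x).pow 2)).mul_const 2⁻¹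
  simp only [div_eq_mul_inv]
  rw [h.fderiv]
  simp
  ring

end Calculus

/-- `B` is isolated by a set `D` of test vectors: the members outside `B` vanish on `D`, and the
restrictions to `D` of the members of `B` are linearly independent. -/
def IsIsolatedBlock {ι R M : Type*} [CommRing R] [TopologicalSpace R] [AddCommGroup M]
    [Module R M] [TopologicalSpace M] (f : ι → M →L[R] R) (B : Finset ι) : Prop :=
  ∃ D : Set M, (∀ j ∉ B, ∀ d ∈ D, f j d = 0) ∧
    ∀ g : ι → R, (∀ d ∈ D, ∑ j ∈ B, g j * f j d = 0) → ∀ j ∈ B, g j = 0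

theorem linearIndependent_of_forall_mem_isolatedBlock {ι R M : Type*} [Fintype ι] [CommRing R]
    [TopologicalSpace R] [IsTopologicalRing R] [AddCommGroup M] [Module R M] [TopologicalSpace M]
    (f : ι → M →L[R] R) (h : ∀ i, ∃ B, i ∈ B ∧ IsIsolatedBlock f B) :
    LinearIndependent R f := by
  rw [Fintype.linearIndependent_iff]
  intro g hg i
  obtain ⟨B, hiB, D, hout, hin⟩ := h i
  refine hin g (fun d hd => ?_) i hiB
  have hgd : ∑ j, g j * f j d = 0 := by simpa using congrArg (· d) hg
  rwa [← Finset.sum_subset (Finset.subset_univ B) fun j _ hj => by rw [hout j hj d hd, mul_zero]]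
    at hgd

section Coordinates

variable {N : ℕ} (hN : 0 < N)

def qDir (s : Fin N) : PhaseSpace N := (Pi.single s 1, 0)

def pDir (s : Fin N) : PhaseSpace N := (0, Pi.single s 1)

lemma co_val {t : ℕ} (ht : t ≤ N) : (co N hN t : ℕ) = t - 1 :=
  Nat.mod_eq_of_lt (by omega)

def emSupport (i : Fin N) : Finset (Fin N) :=
  if (i : ℕ) < (N - 1) / 2 then {co N hN (i + 1), co N hN (N - (i + 1))}
  else if (i : ℕ) < N - 1 then
    {co N hN (i - (N - 1) / 2 + 1), co N hN (N - (i - (N - 1) / 2 + 1))}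
  else {co N hN N}

lemma emFam_eq_aH {i : Fin N} (hi : (i : ℕ) < (N - 1) / 2) :
    emFam N hN i = aH N hN (i + 1) :=
  if_pos hi

lemma emFam_eq_bH {i : Fin N} (hi₁ : (N - 1) / 2 ≤ i) (hi₂ : (i : ℕ) < N - 1) :
    emFam N hN i = bH N hN (i - (N - 1) / 2 + 1) := by
  rw [emFam, if_neg (by omega), if_pos hi₂]

lemma emFam_eq_aNf {i : Fin N} (hi : (i : ℕ) = N - 1) : emFam N hN i = aNf N hN := by
  rw [emFam, if_neg (by omega), if_neg (by omega)]

lemma fderiv_emFam_dir_eq_zero_of_notMem (x : PhaseSpace N) {i s : Fin N}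
    (hs : s ∉ emSupport hN i) :
    fderiv ℝ (emFam N hN i) x (qDir s) = 0 ∧ fderiv ℝ (emFam N hN i) x (pDir s) = 0 := by
  unfold emFam
  unfold emSupport at hs
  split_ifs at hs ⊢ <;>
    simp_all [fderiv_aH_apply, fderiv_bH_apply, fderiv_aNf_apply, qDir, pDir]

lemma co_notMem_emSupport_pair {k : ℕ} (hk : 1 ≤ k) (hkN : 2 * k < N) {j : Fin N}
    (hj₁ : (j : ℕ) ≠ k - 1) (hj₂ : (j : ℕ) ≠ (N - 1) / 2 + k - 1) :
    co N hN k ∉ emSupport hN j ∧ co N hN (N - k) ∉ emSupport hN j := by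
  have := j.isLt
  unfold emSupport
  split_ifs <;>
    simp (disch := omega) only [Finset.mem_insert, Finset.mem_singleton, Fin.ext_iff, co_val] <;>
    omega

lemma co_notMem_emSupport_last {j : Fin N} (hj : (j : ℕ) ≠ N - 1) :
    co N hN N ∉ emSupport hN j := by
  have := j.isLt
  unfold emSupport
  split_ifs <;>
    simp (disch := omega) only [Finset.mem_insert, Finset.mem_singleton, Fin.ext_iff, co_val] <;>
    omega

end Coordinates

lemma hopf_pair_coeffs_eq_zero {c d q₁ p₁ q₂ p₂ : ℝ}
    (hb : |q₁ * p₂ - q₂ * p₁| < (q₁ ^ 2 + p₁ ^ 2 + q₂ ^ 2 + p₂ ^ 2) / 2)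
    (e₁ : c * q₁ + d * p₂ = 0) (e₂ : c * p₁ - d * q₂ = 0)
    (e₃ : c * q₂ - d * p₁ = 0) (e₄ : c * p₂ + d * q₁ = 0) : c = 0 ∧ d = 0 := by
  set S := q₁ ^ 2 + p₁ ^ 2 + q₂ ^ 2 + p₂ ^ 2
  set b := q₁ * p₂ - q₂ * p₁
  -- test the combination against the two gradients, whose Gram matrix is `[[S, 2b], [2b, S]]`
  have h₁ : S * c + 2 * b * d = 0 := by
    linear_combination q₁ * e₁ + p₁ * e₂ + q₂ * e₃ + p₂ * e₄
  have h₂ : 2 * b * c + S * d = 0 := by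
    linear_combination p₂ * e₁ - q₂ * e₂ - p₁ * e₃ + q₁ * e₄
  have hdet : 0 < S ^ 2 - (2 * b) ^ 2 := by
    obtain ⟨hb₁, hb₂⟩ := abs_lt.1 hb
    nlinarith
  constructor
  · have : (S ^ 2 - (2 * b) ^ 2) * c = 0 := by linear_combination S * h₁ - 2 * b * h₂
    exact (mul_eq_zero.1 this).resolve_left hdet.ne'
  · have : (S ^ 2 - (2 * b) ^ 2) * d = 0 := by linear_combination S * h₂ - 2 * b * h₁
    exact (mul_eq_zero.1 this).resolve_left hdet.ne'

section Blocks

variable {N : ℕ} (hN : 0 < N) (x : PhaseSpace N)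

lemma isIsolatedBlock_pair {i₁ i₂ : Fin N} (hi₁ : (i₁ : ℕ) < (N - 1) / 2)
    (hi₂ : (i₂ : ℕ) = (N - 1) / 2 + i₁)
    (hb : |bH N hN (i₁ + 1) x| < aH N hN (i₁ + 1) x) :
    IsIsolatedBlock (fun j => fderiv ℝ (emFam N hN j) x) {i₁, i₂} := by
  set k := (i₁ : ℕ) + 1
  set α := co N hN k
  set β := co N hN (N - k)
  have hαβ : α ≠ β :=
    Fin.ne_of_val_ne (by rw [co_val hN (by omega), co_val hN (by omega)]; omega)
  have hi₁₂ : i₁ ≠ i₂ := Fin.ne_of_val_ne (by omega)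
  set D : Set (PhaseSpace N) := {qDir α, pDir α, qDir β, pDir β}
  refine ⟨D, fun j hj d hd => ?_, fun g hg => ?_⟩
  · simp only [Finset.mem_insert, Finset.mem_singleton, not_or] at hj
    obtain ⟨hα, hβ⟩ := co_notMem_emSupport_pair hN (k := k) (by omega) (by omega)
      (j := j) (by omega) (fun h => hj.2 (Fin.ext (by omega)))
    rcases hd with rfl | rfl | rfl | rfl
    · exact (fderiv_emFam_dir_eq_zero_of_notMem hN x hα).1
    · exact (fderiv_emFam_dir_eq_zero_of_notMem hN x hα).2
    · exact (fderiv_emFam_dir_eq_zero_of_notMem hN x hβ).1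
    · exact (fderiv_emFam_dir_eq_zero_of_notMem hN x hβ).2
  · have hE₁ : emFam N hN i₁ = aH N hN k := emFam_eq_aH hN hi₁
    have hE₂ : emFam N hN i₂ = bH N hN k := by
      rw [emFam_eq_bH hN (by omega) (by omega)]
      congr 1
      omega
    have e : ∀ d ∈ D,
        g i₁ * (x.1 α * d.1 α + x.2 α * d.2 α + x.1 β * d.1 β + x.2 β * d.2 β)
          + g i₂ * (d.1 α * x.2 β + x.1 α * d.2 β - d.1 β * x.2 α - x.1 β * d.2 α)
        = 0 := by
      simpa only [Finset.sum_pair hi₁₂, hE₁, hE₂, fderiv_aH_apply, fderiv_bH_apply] using hg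
    obtain ⟨h₁, h₂⟩ := hopf_pair_coeffs_eq_zero hb
      (by simpa [qDir, hαβ] using e (qDir α) (by simp [D]))
      (by simpa [pDir, hαβ, sub_eq_add_neg] using e (pDir α) (by simp [D]))
      (by simpa [qDir, hαβ.symm, sub_eq_add_neg] using e (qDir β) (by simp [D]))
      (by simpa [pDir, hαβ.symm] using e (pDir β) (by simp [D]))
    simp [h₁, h₂]

lemma isIsolatedBlock_last {i : Fin N} (hi : (i : ℕ) = N - 1) (ha : 0 < aNf N hN x) :
    IsIsolatedBlock (fun j => fderiv ℝ (emFam N hN j) x) {i} := by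
  set γ := co N hN N
  set D : Set (PhaseSpace N) := {qDir γ, pDir γ}
  refine ⟨D, fun j hj d hd => ?_, fun g hg => ?_⟩
  · have hγ := co_notMem_emSupport_last hN (j := j)
      (fun h => Finset.mem_singleton.not.1 hj (Fin.ext (by omega)))
    rcases hd with rfl | rfl
    · exact (fderiv_emFam_dir_eq_zero_of_notMem hN x hγ).1
    · exact (fderiv_emFam_dir_eq_zero_of_notMem hN x hγ).2
  · have e : ∀ d ∈ D, g i * (x.1 γ * d.1 γ + x.2 γ * d.2 γ) = 0 := by
      simpa only [Finset.sum_singleton, emFam_eq_aNf hN hi, fderiv_aNf_apply] using hg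
    have e₁ : g i * x.1 γ = 0 := by simpa [qDir] using e (qDir γ) (by simp [D])
    have e₂ : g i * x.2 γ = 0 := by simpa [pDir] using e (pDir γ) (by simp [D])
    have : g i * (2 * aNf N hN x) = 0 := by
      unfold aNf
      linear_combination x.1 γ * e₁ + x.2 γ * e₂
    simpa [ha.ne'] using this

end Blocks

theorem energy_momentum_regular_general (N : ℕ) (hodd : Odd N) (hN0 : 0 < N)
    (x : (Fin N → ℝ) × (Fin N → ℝ))
    (hreg : ∀ k, 1 ≤ k → k ≤ (N - 1) / 2 →
      0 < aH N hN0 k x ∧ |bH N hN0 k x| < aH N hN0 k x)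
    (haN : 0 < aNf N hN0 x) :
    LinearIndependent ℝ (fun i : Fin N => fderiv ℝ (emFam N hN0 i) x) := by
  obtain ⟨m, hm⟩ := hodd
  have hmN : (N - 1) / 2 = m := by omega
  refine linearIndependent_of_forall_mem_isolatedBlock _ fun i => ?_
  have hi := i.isLt
  rcases lt_or_ge (i : ℕ) m with hi₁ | hi₁
  · exact ⟨{i, ⟨m + i, by omega⟩}, by simp, isIsolatedBlock_pair hN0 x (by omega)
      (by simp [hmN]) (hreg _ le_add_self (by omega)).2⟩
  rcases lt_or_ge (i : ℕ) (N - 1) with hi₂ | hi₂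
  · exact ⟨{⟨i - m, by omega⟩, i}, by simp, isIsolatedBlock_pair hN0 x
      (i₁ := ⟨i - m, by omega⟩) (by simp only; omega) (by simp only; omega)
      (hreg _ le_add_self (by simp only; omega)).2⟩
  · exact ⟨_, Finset.mem_singleton_self i, isIsolatedBlock_last hN0 x (by omega) haN⟩

/-- For `N ≥ 3` odd, `m = (N−1)/2`, at every point of the regular
set `U_r = { x : a_k(x) > 0, |b_k(x)| < a_k(x) (1 ≤ k ≤ m), a_N(x) > 0 }` the
derivatives of the `N` functions `a_1, …, a_m, b_1, …, b_m, a_N` are linearly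
independent. -/
theorem energy_momentum_regular (N : ℕ) (hN : 3 ≤ N) (hodd : Odd N) (hN0 : 0 < N)
    (x : (Fin N → ℝ) × (Fin N → ℝ))
    (hreg : ∀ k, 1 ≤ k → k ≤ (N - 1) / 2 →
      0 < aH N hN0 k x ∧ |bH N hN0 k x| < aH N hN0 k x)
    (haN : 0 < aNf N hN0 x) :
    LinearIndependent ℝ (fun i : Fin N => fderiv ℝ (emFam N hN0 i) x) :=
  energy_momentum_regular_general N hodd hN0 x hreg haN
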